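/- For every n ∈ ℕ, the subset V_n = {χ ∈ Sp C | deg χ ≤ n} is compact in Sp C. -/

import Mathlib

/-!
For every object `X` there is `m` with `χ(X) ≤ m · deg χ` for all characters `χ`: peel simple
subobjects off the quotients of `X`, by noetherian induction on their kernels. Hence the characters
of degree at most `n` form a compact subset of the product space `C → ℕ`; it is closed because the
character axioms are pointwise conditions. An ultrafilter on `V_n` therefore converges pointwise to
a nonzero character `χ₀` of degree at most `n`, and any irreducible summand `θ` of `χ₀` is a limit
of it in `Sp C`: `χ ↦ χ(α)` is additive and nonnegative, so `θ(α) ≠ 0` forces `χ₀(α) ≠ 0`, and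
`χ(α) = χ₀(α)` eventually.
-/

open CategoryTheory CategoryTheory.Limits ZeroObject

universe w v u

namespace BrauerThrall

/-- A character for an additive category `D` (with zero morphisms):
a function on objects, additive on biproducts and subadditive on
right exact sequences `X → Y → Z → 0` (`Z` a cokernel of `X → Y`). -/
structure Character (D : Type u) [Category.{v} D] [HasZeroMorphisms D] where
  toFun : D → ℕ
  additive : ∀ (X Y : D) (b : BinaryBicone X Y), b.IsBilimit → toFun b.pt = toFun X + toFun Y
  subadditive : ∀ ⦃X Y : D⦄ (f : X ⟶ Y) (c : CokernelCofork f), IsColimit c →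
    toFun Y ≤ toFun X + toFun c.pt

variable {D : Type u} [Category.{v} D] [HasZeroMorphisms D]

/-- A character is irreducible if it is nonzero and not the sum of two nonzero characters. -/
def Character.IsIrreducible (χ : Character D) : Prop :=
  χ.toFun ≠ 0 ∧ ¬ ∃ φ ψ : Character D, φ.toFun ≠ 0 ∧ ψ.toFun ≠ 0 ∧
    ∀ X : D, χ.toFun X = φ.toFun X + ψ.toFun X

/-- `Sp D`, the set of irreducible characters. -/
def Sp (D : Type u) [Category.{v} D] [HasZeroMorphisms D] : Type u :=
  {χ : Character D // χ.IsIrreducible}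

variable {C : Type u} [Category.{v} C] [Abelian C]

/-- For a morphism `α : X ⟶ Y`, `χ(α) = χ(X) - χ(Y) + χ(Coker α)`. -/
noncomputable def Character.eval (χ : Character C) {X Y : C} (α : X ⟶ Y) : ℤ :=
  (χ.toFun X : ℤ) - χ.toFun Y + χ.toFun (cokernel α)

variable (C) in
/-- The basic open subsets `U_α` of `Sp C`. -/
def spBasis : Set (Set (Sp C)) :=
  {U | ∃ (X Y : C) (α : X ⟶ Y), U = {χ : Sp C | χ.1.eval α ≠ 0}}

variable (C) in
/-- The Ziegler-type topology on `Sp C`, generated by the sets `U_α`. -/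
noncomputable def spTopology : TopologicalSpace (Sp C) :=
  TopologicalSpace.generateFrom (spBasis C)

/-- `χ` is the character `χ_M` of the object `M`, i.e. `χ(X)` is the length of
`Hom(X, M)` as a module over `End(M)` (the length of a module being the
supremum of the lengths of chains of submodules). -/
def IsCharOf (χ : Character C) (M : C) : Prop :=
  ∀ X : C, ((χ.toFun X : ℕ∞) : WithBot ℕ∞) = Order.krullDim (Submodule (End M) (X ⟶ M))

/-- A morphism `φ : M ⟶ N` is left almost split if it is not a split monomorphism and
every non-split-monomorphism out of `M` factors through it. -/
def IsLeftAlmostSplit {M N : C} (φ : M ⟶ N) : Prop :=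
  ¬ IsSplitMono φ ∧ ∀ (N' : C) (g : M ⟶ N'), ¬ IsSplitMono g → ∃ h : N ⟶ N', φ ≫ h = g

variable (C) in
/-- The standard hypotheses: `C` is a length category (all objects are noetherian and
artinian), `Hom`-finite over `k`, with finitely many simple objects up to isomorphism. -/
def LengthCategory (k : Type w) [CommRing k] [Linear k C] : Prop :=
  (∀ X : C, IsNoetherianObject X) ∧ (∀ X : C, IsArtinianObject X) ∧
  (∀ X Y : C, IsFiniteLength k (X ⟶ Y)) ∧
  (∃ (n : ℕ) (f : Fin n → C), ∀ X : C, Simple X → ∃ i, Nonempty (X ≅ f i))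

open Filter Topology

theorem mono_of_kernelSubobject_comp_le {X Z W : C} {p : X ⟶ Z} [Epi p] (g : Z ⟶ W)
    (h : kernelSubobject (p ≫ g) ≤ kernelSubobject p) : Mono g := by
  refine Preadditive.mono_of_cancel_zero _ fun {V} t ht => ?_
  have hfst : pullback.fst p t ≫ p = 0 := by
    refine (kernelSubobject_factors_iff p _).1 (Subobject.factors_of_le _ h ?_)
    refine kernelSubobject_factors _ _ ?_
    rw [← Category.assoc, pullback.condition, Category.assoc, ht, comp_zero]
  rw [← cancel_epi (pullback.snd p t), ← pullback.condition, hfst, comp_zero]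

theorem kernelSubobject_lt_kernelSubobject_comp {X Z W : C} (p : X ⟶ Z) [Epi p] (g : Z ⟶ W)
    (hg : ¬ Mono g) : kernelSubobject p < kernelSubobject (p ≫ g) :=
  (kernelSubobject_comp_le p g).lt_of_not_ge fun h => hg (mono_of_kernelSubobject_comp_le g h)

namespace Character

instance : Zero (Character D) where
  zero := ⟨0, fun _ _ _ _ => rfl, fun _ _ _ _ _ => le_rfl⟩

instance : Add (Character D) where
  add φ ψ :=
    { toFun := φ.toFun + ψ.toFun
      additive := fun X Y b hb => by
        simp only [Pi.add_apply, φ.additive X Y b hb, ψ.additive X Y b hb]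
        ring
      subadditive := fun X Y f c hc => by
        simp only [Pi.add_apply]
        linarith [φ.subadditive f c hc, ψ.subadditive f c hc] }

@[simp] theorem toFun_zero : (0 : Character D).toFun = 0 := rfl

@[simp] theorem toFun_add (φ ψ : Character D) : (φ + ψ).toFun = φ.toFun + ψ.toFun := rfl

def deg {ι : Type} [Fintype ι] (S : ι → D) (χ : Character D) : ℕ := ∑ i, χ.toFun (S i)

theorem deg_eq_add_of_toFun_eq_add {ι : Type} [Fintype ι] (S : ι → D) {χ φ ψ : Character D}
    (h : χ.toFun = (φ + ψ).toFun) : χ.deg S = φ.deg S + ψ.deg S := by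
  simp only [deg, h, toFun_add, Pi.add_apply, Finset.sum_add_distrib]

section Abelian

variable (χ : Character C)

theorem toFun_iso_eq_add_toFun_zero {X Y : C} (e : X ≅ Y) :
    χ.toFun Y = χ.toFun X + χ.toFun 0 := by
  refine χ.additive X 0
    { pt := Y, fst := e.inv, snd := 0, inl := e.hom, inr := 0,
      inr_snd := HasZeroObject.from_zero_ext _ _ } (isBinaryBilimitOfTotal _ ?_)
  simp

@[simp] theorem toFun_zero_obj : χ.toFun 0 = 0 := by
  have := χ.toFun_iso_eq_add_toFun_zero (Iso.refl 0)
  omega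

theorem toFun_congr_iso {X Y : C} (e : X ≅ Y) : χ.toFun X = χ.toFun Y := by
  simp [χ.toFun_iso_eq_add_toFun_zero e]

theorem toFun_le_add_toFun_cokernel {X Y : C} (f : X ⟶ Y) :
    χ.toFun Y ≤ χ.toFun X + χ.toFun (cokernel f) :=
  χ.subadditive f (Cofork.ofπ _ _) (cokernelIsCokernel f)

theorem eval_nonneg {X Y : C} (α : X ⟶ Y) : 0 ≤ χ.eval α := by
  have := χ.toFun_le_add_toFun_cokernel α
  simp only [eval]
  omega

theorem eval_add (φ ψ : Character C) {X Y : C} (α : X ⟶ Y) :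
    (φ + ψ).eval α = φ.eval α + ψ.eval α := by
  simp only [eval, toFun_add, Pi.add_apply]
  push_cast
  ring

theorem eval_ne_zero_of_eq_add {θ ρ : Character C} (h : χ.toFun = (θ + ρ).toFun) {X Y : C}
    {α : X ⟶ Y} (hθ : θ.eval α ≠ 0) : χ.eval α ≠ 0 := by
  have hsum : χ.eval α = θ.eval α + ρ.eval α := by rw [← eval_add, eval, eval, h]
  have := θ.eval_nonneg α
  have := ρ.eval_nonneg α
  omega

theorem toFun_le_deg_of_simple {ι : Type} [Fintype ι] {S : ι → C}
    (hS : ∀ X : C, Simple X → ∃ i, Nonempty (X ≅ S i)) (T : C) [Simple T] :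
    χ.toFun T ≤ χ.deg S := by
  obtain ⟨i, ⟨e⟩⟩ := hS T inferInstance
  rw [χ.toFun_congr_iso e]
  exact Finset.single_le_sum (f := fun i => χ.toFun (S i)) (fun _ _ => Nat.zero_le _)
    (Finset.mem_univ i)

end Abelian

theorem exists_toFun_quotient_le_mul_deg {X : C} [IsNoetherianObject X]
    (hA : ∀ Z : C, IsArtinianObject Z) {ι : Type} [Fintype ι] {S : ι → C}
    (hS : ∀ X : C, Simple X → ∃ i, Nonempty (X ≅ S i)) {Z : C} (p : X ⟶ Z) [Epi p] :
    ∃ m : ℕ, ∀ χ : Character C, χ.toFun Z ≤ m * χ.deg S := by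
  induction hK : kernelSubobject p using WellFoundedGT.induction generalizing Z with
  | _ K ih =>
  subst hK
  by_cases hZ : IsZero Z
  · exact ⟨0, fun χ => by simp [χ.toFun_congr_iso hZ.isoZero]⟩
  have := hA Z
  obtain ⟨T, hT⟩ := exists_simple_subobject hZ
  have hlt := kernelSubobject_lt_kernelSubobject_comp p (cokernel.π T.arrow) fun _ =>
    Simple.not_isZero (T : C)
      (.of_mono_eq_zero _ (zero_of_comp_mono _ (cokernel.condition T.arrow)))
  obtain ⟨m, hm⟩ := ih _ hlt (p ≫ cokernel.π T.arrow) rfl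
  refine ⟨m + 1, fun χ => ?_⟩
  calc χ.toFun Z ≤ χ.toFun T + χ.toFun (cokernel T.arrow) := χ.toFun_le_add_toFun_cokernel _
    _ ≤ χ.deg S + m * χ.deg S := add_le_add (χ.toFun_le_deg_of_simple hS T) (hm χ)
    _ = (m + 1) * χ.deg S := by ring

theorem exists_toFun_le_mul_deg (hA : ∀ X : C, IsArtinianObject X) {ι : Type} [Fintype ι]
    {S : ι → C} (hS : ∀ X : C, Simple X → ∃ i, Nonempty (X ≅ S i)) (X : C)
    [IsNoetherianObject X] : ∃ m : ℕ, ∀ χ : Character C, χ.toFun X ≤ m * χ.deg S :=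
  exists_toFun_quotient_le_mul_deg hA hS (𝟙 X)

section LengthCategory

variable {ι : Type} [Fintype ι] {S : ι → C}

theorem deg_pos (hN : ∀ X : C, IsNoetherianObject X) (hA : ∀ X : C, IsArtinianObject X)
    (hS : ∀ X : C, Simple X → ∃ i, Nonempty (X ≅ S i)) {χ : Character C} (hχ : χ.toFun ≠ 0) :
    0 < χ.deg S := by
  refine Nat.pos_of_ne_zero fun h => hχ (funext fun X => ?_)
  obtain ⟨m, hm⟩ := exists_toFun_le_mul_deg hA hS X
  simpa [h] using hm χ

theorem exists_isIrreducible_add (hN : ∀ X : C, IsNoetherianObject X)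
    (hA : ∀ X : C, IsArtinianObject X) (hS : ∀ X : C, Simple X → ∃ i, Nonempty (X ≅ S i))
    (χ : Character C) (hχ : χ.toFun ≠ 0) :
    ∃ θ ρ : Character C, θ.IsIrreducible ∧ χ.toFun = (θ + ρ).toFun := by
  induction hd : χ.deg S using Nat.strong_induction_on generalizing χ with
  | _ d ih =>
  by_cases hχirr : χ.IsIrreducible
  · exact ⟨χ, 0, hχirr, by simp⟩
  obtain ⟨φ, ψ, hφ, hψ, hsum⟩ : ∃ φ ψ : Character C, φ.toFun ≠ 0 ∧ ψ.toFun ≠ 0 ∧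
      ∀ X : C, χ.toFun X = φ.toFun X + ψ.toFun X := by
    by_contra h
    exact hχirr ⟨hχ, h⟩
  have hχφψ : χ.toFun = (φ + ψ).toFun := funext hsum
  have hdeg := deg_eq_add_of_toFun_eq_add S hχφψ
  obtain ⟨θ, ρ, hθ, hφθρ⟩ := ih _ (by have := deg_pos hN hA hS hψ; omega) φ hφ rfl
  exact ⟨θ, ρ + ψ, hθ, by simp only [hχφψ, toFun_add, hφθρ, add_assoc]⟩

end LengthCategory

theorem isClosed_range_toFun : IsClosed (Set.range (toFun : Character D → D → ℕ)) := by
  have hrange : Set.range (toFun : Character D → D → ℕ) =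
      {f | ∀ X Y (b : BinaryBicone X Y), b.IsBilimit → f b.pt = f X + f Y} ∩
      {f | ∀ X Y (g : X ⟶ Y) (c : CokernelCofork g), IsColimit c → f Y ≤ f X + f c.pt} := by
    ext f
    refine ⟨?_, fun ⟨hadd, hsub⟩ => ⟨⟨f, hadd, fun X Y => hsub X Y⟩, rfl⟩⟩
    rintro ⟨χ, rfl⟩
    exact ⟨χ.additive, fun X Y => χ.subadditive (X := X) (Y := Y)⟩
  rw [hrange]
  simp only [Set.ofPred_forall]
  exact .inter
    (isClosed_iInter fun X => isClosed_iInter fun Y => isClosed_iInter fun b =>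
      isClosed_iInter fun _ =>
        isClosed_eq (by fun_prop) (by fun_prop))
    (isClosed_iInter fun X => isClosed_iInter fun Y => isClosed_iInter fun g =>
      isClosed_iInter fun c => isClosed_iInter fun _ =>
        isClosed_le (by fun_prop) (by fun_prop))

theorem isCompact_image_toFun_deg_le (hN : ∀ X : C, IsNoetherianObject X)
    (hA : ∀ X : C, IsArtinianObject X) {ι : Type} [Fintype ι] {S : ι → C}
    (hS : ∀ X : C, Simple X → ∃ i, Nonempty (X ≅ S i)) (n : ℕ) :
    IsCompact (toFun '' {χ : Character C | 0 < χ.deg S ∧ χ.deg S ≤ n}) := by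
  choose m hm using fun X => exists_toFun_le_mul_deg hA hS X
  have himage : toFun '' {χ : Character C | 0 < χ.deg S ∧ χ.deg S ≤ n} =
      Set.range toFun ∩ (fun f : C → ℕ => ∑ i, f (S i)) ⁻¹' {d | 0 < d ∧ d ≤ n} := by
    ext f
    constructor
    · rintro ⟨χ, hχ, rfl⟩
      exact ⟨⟨χ, rfl⟩, hχ⟩
    · rintro ⟨⟨χ, rfl⟩, hχ⟩
      exact ⟨χ, hχ, rfl⟩
  refine (isCompact_univ_pi fun X => (Set.finite_Iic (m X * n)).isCompact).of_isClosed_subset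
    ?_ ?_
  · rw [himage]
    exact isClosed_range_toFun.inter ((isClosed_discrete _).preimage (by fun_prop))
  · rintro _ ⟨χ, ⟨-, hχ⟩, rfl⟩ X -
    exact (hm X χ).trans (Nat.mul_le_mul_left _ hχ)

theorem eventually_eval_eq {β : Type*} {F : Filter β} {g : β → Character C}
    {χ₀ : Character C} (h : Tendsto (fun b => (g b).toFun) F (𝓝 χ₀.toFun)) {X Y : C}
    (α : X ⟶ Y) : ∀ᶠ b in F, (g b).eval α = χ₀.eval α := by
  have he : Continuous fun f : C → ℕ => (f X : ℤ) - f Y + f (cokernel α) := by fun_prop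
  have := (he.tendsto _).comp h
  rwa [nhds_discrete, tendsto_pure] at this

end Character

attribute [local instance] spTopology

theorem Sp.le_nhds_iff {F : Filter (Sp C)} {θ : Sp C} :
    F ≤ 𝓝 θ ↔ ∀ (X Y : C) (α : X ⟶ Y), θ.1.eval α ≠ 0 → {χ : Sp C | χ.1.eval α ≠ 0} ∈ F := by
  rw [spTopology, ← tendsto_id', TopologicalSpace.tendsto_nhds_generateFrom_iff]
  simp only [spBasis, Set.mem_ofPred_eq, Set.preimage_id_eq, id_eq]
  exact ⟨fun h X Y α => h _ ⟨X, Y, α, rfl⟩, fun h _ ⟨X, Y, α, hs⟩ => hs ▸ h X Y α⟩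

theorem statement3_general (k : Type w) [CommRing k] (C : Type u) [Category.{v} C] [Abelian C]
    [Linear k C] (hC : LengthCategory C k)
    (ι : Type) [Fintype ι] (S : ι → C)
    (hSrep : ∀ X : C, Simple X → ∃ i, Nonempty (X ≅ S i))
    (n : ℕ) :
    @IsCompact (Sp C) (spTopology C) {χ : Sp C | ∑ i, χ.1.toFun (S i) ≤ n} := by
  obtain ⟨hN, hA, -, -⟩ := hC
  refine isCompact_iff_ultrafilter_le_nhds.2 fun F hF => ?_
  have hlim : Character.toFun '' {χ : Character C | 0 < χ.deg S ∧ χ.deg S ≤ n} ∈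
      F.map (·.1.toFun) :=
    Ultrafilter.mem_map.2 <| mem_of_superset (le_principal_iff.1 hF) fun χ hχ =>
      ⟨χ.1, ⟨Character.deg_pos hN hA hSrep χ.2.1, hχ⟩, rfl⟩
  obtain ⟨_, ⟨χ₀, ⟨hpos, hle⟩, rfl⟩, hχ₀⟩ :=
    (Character.isCompact_image_toFun_deg_le hN hA hSrep n).ultrafilter_le_nhds _
      (le_principal_iff.2 hlim)
  obtain ⟨θ, ρ, hθ, hχ₀θρ⟩ := χ₀.exists_isIrreducible_add hN hA hSrep (fun h => by
    simp [Character.deg, h] at hpos)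
  refine ⟨⟨θ, hθ⟩, ?_, Sp.le_nhds_iff.2 fun X Y α hα => ?_⟩
  · have hdeg := Character.deg_eq_add_of_toFun_eq_add S hχ₀θρ
    exact le_trans (Nat.le_add_right _ _) (hdeg ▸ hle)
  · filter_upwards [Character.eventually_eval_eq (g := Subtype.val) hχ₀ α] with χ hχ
    exact hχ ▸ χ₀.eval_ne_zero_of_eq_add hχ₀θρ hα

/-- For every `n ∈ ℕ`, the subset `V_n = {χ ∈ Sp C | deg χ ≤ n}` is compact in `Sp C`;
here `deg χ = ∑ᵢ χ(Sᵢ)` for a set of representatives `Sᵢ` of the isomorphism classes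
of simple objects of `C`. -/
theorem statement3 (k : Type w) [CommRing k] (C : Type u) [Category.{v} C] [Abelian C]
    [Linear k C] (hC : LengthCategory C k)
    (ι : Type) [Fintype ι] (S : ι → C) (hS : ∀ i, Simple (S i))
    (hSrep : ∀ X : C, Simple X → ∃ i, Nonempty (X ≅ S i))
    (hSdistinct : ∀ i j, i ≠ j → IsEmpty (S i ≅ S j)) (n : ℕ) :
    @IsCompact (Sp C) (spTopology C) {χ : Sp C | ∑ i, χ.1.toFun (S i) ≤ n} :=
  statement3_general k C hC ι S hSrep n

end BrauerThrall
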